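/- arXiv:1811.00015 — 6 statements merged into one kernel-verified Lean document; each statement's English description precedes it below -/
import Mathlib

section
/- Let {T0, T1} be a pair of disjoint subsets of the power set of a finite set V of cardinality v, and let t ≤ v. Then {T0, T1} is a [t]-trade if and only if every (v−t)-subcube of the v-cube contains the same number of elements of T0 as of T1. -/
/-- The size (number of ones) of a vector of `F_2^v`, viewed as the
cardinality of the corresponding subset of `{1,…,v}`. -/
def size {v : ℕ} (x : Fin v → ZMod 2) : ℕ :=
  (Finset.univ.filter (fun j => x j = 1)).card

/-- A `[t]`-trade: a pair of disjoint subsets of the `v`-cube such that every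
subset of size at most `t` is included in the same number of blocks of each leg. -/
def IsTrade (t v : ℕ) (T0 T1 : Finset (Fin v → ZMod 2)) : Prop :=
  Disjoint T0 T1 ∧
  ∀ s : Fin v → ZMod 2, size s ≤ t →
    (T0.filter (fun x => ∀ j, s j = 1 → x j = 1)).card =
    (T1.filter (fun x => ∀ j, s j = 1 → x j = 1)).card


def cnt {v : ℕ} (T : Finset (Fin v → ZMod 2)) (K : Finset (Fin v))
    (b : Fin v → ZMod 2) : ℕ :=
  (T.filter (fun x => ∀ j ∈ K, x j = b j)).card

lemma cnt_split {v : ℕ} (T : Finset (Fin v → ZMod 2)) (K : Finset (Fin v))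
    (b : Fin v → ZMod 2) {j : Fin v} (hj : j ∉ K) :
    cnt T K b = cnt T (insert j K) (Function.update b j 0)
      + cnt T (insert j K) (Function.update b j 1) := by
  classical
  have key : ∀ c : ZMod 2,
      T.filter (fun x => ∀ i ∈ insert j K, x i = Function.update b j c i)
        = (T.filter (fun x => ∀ i ∈ K, x i = b i)).filter (fun x => x j = c) := by
    intro c
    ext x
    simp only [Finset.mem_filter, Finset.forall_mem_insert, Function.update_self]
    constructor
    · rintro ⟨hx, hc, hK'⟩
      refine ⟨⟨hx, fun i hi => ?_⟩, hc⟩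
      have := hK' i hi
      rwa [Function.update_of_ne (ne_of_mem_of_not_mem hi hj)] at this
    · rintro ⟨⟨hx, hK'⟩, hc⟩
      refine ⟨hx, hc, fun i hi => ?_⟩
      rw [Function.update_of_ne (ne_of_mem_of_not_mem hi hj)]
      exact hK' i hi
  unfold cnt
  rw [key 0, key 1]
  have h1 : ((T.filter (fun x => ∀ i ∈ K, x i = b i)).filter (fun x => x j = (1:ZMod 2)))
      = ((T.filter (fun x => ∀ i ∈ K, x i = b i)).filter (fun x => ¬ x j = (0:ZMod 2))) := by
    apply Finset.filter_congr
    intro x _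
    constructor
    · intro h; rw [h]; decide
    · intro h; revert h; generalize x j = a; revert a; decide
  rw [h1, Finset.card_filter_add_card_filter_not]

lemma trade_to_cnt {v t : ℕ} {T0 T1 : Finset (Fin v → ZMod 2)}
    (h : ∀ s : Fin v → ZMod 2, (Finset.univ.filter (fun j => s j = 1)).card ≤ t →
      (T0.filter (fun x => ∀ j, s j = 1 → x j = 1)).card =
      (T1.filter (fun x => ∀ j, s j = 1 → x j = 1)).card) :
    ∀ (n : ℕ) (K : Finset (Fin v)) (b : Fin v → ZMod 2),
      (K.filter (fun j => b j = 0)).card = n → K.card ≤ t →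
      cnt T0 K b = cnt T1 K b := by
  intro n
  induction n with
  | zero =>
    intro K b h0 hK
    have hb : ∀ j ∈ K, b j = 1 := by
      intro j hj
      have hne : b j ≠ 0 := by
        intro h'
        have hmem : j ∈ K.filter (fun j => b j = 0) := Finset.mem_filter.mpr ⟨hj, h'⟩
        rw [Finset.card_eq_zero.mp h0] at hmem
        exact absurd hmem (Finset.notMem_empty j)
      revert hne; generalize b j = a; revert a; decide
    set s : Fin v → ZMod 2 := fun j => if j ∈ K then 1 else 0 with hs
    have hsK : ∀ j, s j = 1 ↔ j ∈ K := by
      intro j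
      by_cases hj : j ∈ K <;> simp [hs, hj]
    have hsize : (Finset.univ.filter (fun j => s j = 1)).card ≤ t := by
      have : Finset.univ.filter (fun j => s j = 1) = K := by
        ext j; simp [hsK j]
      rw [this]; exact hK
    have key := h s hsize
    have e0 : ∀ (T : Finset (Fin v → ZMod 2)),
        T.filter (fun x => ∀ j ∈ K, x j = b j)
          = T.filter (fun x => ∀ j, s j = 1 → x j = 1) := by
      intro T
      apply Finset.filter_congr
      intro x _
      constructor
      · intro hx j hj
        rw [hx j ((hsK j).mp hj)]
        exact hb j ((hsK j).mp hj)
      · intro hx j hj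
        rw [hb j hj]
        exact hx j ((hsK j).mpr hj)
    unfold cnt
    rw [e0 T0, e0 T1, key]
  | succ n ih =>
    intro K b h0 hK
    have hne : (K.filter (fun j => b j = 0)).Nonempty := by
      rw [← Finset.card_pos, h0]; omega
    obtain ⟨j, hjmem⟩ := hne
    have hjK : j ∈ K := (Finset.mem_filter.mp hjmem).1
    have hbj : b j = 0 := (Finset.mem_filter.mp hjmem).2
    have hjK' : j ∉ K.erase j := Finset.notMem_erase j K
    have hsplit0 := cnt_split T0 (K.erase j) b hjK'
    have hsplit1 := cnt_split T1 (K.erase j) b hjK'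
    rw [Finset.insert_erase hjK] at hsplit0 hsplit1
    have hupd : Function.update b j 0 = b := by
      rw [← hbj]; exact Function.update_eq_self j b
    rw [hupd] at hsplit0 hsplit1
    have hfil1 : ((K.erase j).filter (fun i => b i = 0)).card = n := by
      have : (K.erase j).filter (fun i => b i = 0)
          = (K.filter (fun i => b i = 0)).erase j := by
        ext i
        simp only [Finset.mem_filter, Finset.mem_erase]
        tauto
      rw [this, Finset.card_erase_of_mem hjmem, h0]; omega
    have hfil2 : (K.filter (fun i => Function.update b j 1 i = 0)).card = n := by
      have : K.filter (fun i => Function.update b j 1 i = 0)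
          = (K.filter (fun i => b i = 0)).erase j := by
        ext i
        simp only [Finset.mem_filter, Finset.mem_erase]
        constructor
        · rintro ⟨hi, hv⟩
          have hij : i ≠ j := by
            intro h'; subst h'; rw [Function.update_self] at hv; exact absurd hv (by decide)
          rw [Function.update_of_ne hij] at hv
          exact ⟨hij, hi, hv⟩
        · rintro ⟨hij, hi, hv⟩
          exact ⟨hi, by rwa [Function.update_of_ne hij]⟩
      rw [this, Finset.card_erase_of_mem hjmem, h0]; omega
    have ih1 := ih (K.erase j) b hfil1 (le_trans (Finset.card_le_card (Finset.erase_subset j K)) hK)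
    have ih2 := ih K (Function.update b j 1) hfil2 hK
    omega

lemma cube_to_cnt {v t : ℕ} (ht : t ≤ v) {T0 T1 : Finset (Fin v → ZMod 2)}
    (h : ∀ (K : Finset (Fin v)) (b : Fin v → ZMod 2), K.card = t →
      cnt T0 K b = cnt T1 K b) :
    ∀ (m : ℕ) (K : Finset (Fin v)) (b : Fin v → ZMod 2), K.card + m = t →
      cnt T0 K b = cnt T1 K b := by
  intro m
  induction m with
  | zero => intro K b hK; exact h K b (by omega)
  | succ m ih =>
    intro K b hK
    have hKv : K.card < v := by omega
    obtain ⟨j, hj⟩ : ∃ j, j ∉ K := by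
      by_contra h'
      push_neg at h'
      have : K = Finset.univ := Finset.eq_univ_iff_forall.mpr h'
      rw [this, Finset.card_univ, Fintype.card_fin] at hKv
      omega
    rw [cnt_split T0 K b hj, cnt_split T1 K b hj]
    have hc : (insert j K).card + m = t := by
      rw [Finset.card_insert_of_notMem hj]; omega
    rw [ih _ _ hc, ih _ _ hc]

/-- a pair of disjoint subsets of the `v`-cube is a `[t]`-trade iff every
`(v-t)`-subcube (obtained by fixing `t` coordinates) contains the same number of
elements of `T0` as of `T1`. -/
theorem tTrade_iff_subcubes (v t : ℕ) (ht : t ≤ v)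
    (T0 T1 : Finset (Fin v → ZMod 2)) (hdis : Disjoint T0 T1) :
    IsTrade t v T0 T1 ↔
      ∀ (K : Finset (Fin v)) (b : Fin v → ZMod 2), K.card = t →
        (T0.filter (fun x => ∀ j ∈ K, x j = b j)).card =
        (T1.filter (fun x => ∀ j ∈ K, x j = b j)).card := by

  constructor
  · rintro ⟨_, htr⟩ K b hK
    have htr' : ∀ s : Fin v → ZMod 2,
        (Finset.univ.filter (fun j => s j = 1)).card ≤ t →
        (T0.filter (fun x => ∀ j, s j = 1 → x j = 1)).card =
        (T1.filter (fun x => ∀ j, s j = 1 → x j = 1)).card := htr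
    exact trade_to_cnt htr' _ K b rfl (le_of_eq hK)
  · intro h
    refine ⟨hdis, fun s hs => ?_⟩
    set K : Finset (Fin v) := Finset.univ.filter (fun j => s j = 1) with hKdef
    have hKcard : K.card ≤ t := hs
    have key := cube_to_cnt ht h (t - K.card) K s (by omega)
    have e : ∀ (T : Finset (Fin v → ZMod 2)),
        T.filter (fun x => ∀ j ∈ K, x j = s j)
          = T.filter (fun x => ∀ j, s j = 1 → x j = 1) := by
      intro T
      apply Finset.filter_congr
      intro x _
      have hmem : ∀ j, j ∈ K ↔ s j = 1 := by
        intro j; simp [hKdef]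
      constructor
      · intro hx j hj
        rw [hx j ((hmem j).mpr hj)]; exact hj
      · intro hx j hj
        rw [hx j ((hmem j).mp hj)]; exact ((hmem j).mp hj).symm
    unfold cnt at key
    rwa [e T0, e T1] at key
end

section
/- Let {T0, T1} be a [t]-trade on 2^V with |V| = v, and let i ∈ {1,…,v}. Then the pair {T0', T1'} obtained by replacing every block (x_1,…,x_v) of T0 and of T1 by the (v+1)-tuple (x_1,…,x_v,x_i) (duplicating the i-th coordinate) is a [t]-trade on the (v+1)-cube. -/
/-!
Duplicating the `i`-th coordinate is precomposition `x ↦ x ∘ g` with the surjection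
`g : Fin (v + 1) → Fin v` sending `last v` to `i` and `castSucc j` to `j`. Precomposition with a
surjection is injective on blocks, and a block `x ∘ g` contains `s` exactly when `x` contains the
image `g(s)`, which is no larger than `s`. So the block counts of the new pair at `s` are those
of the old pair at `g(s)`.
-/

open Finset

section Pushforward

variable {v w : ℕ}

def pushforward (g : Fin w → Fin v) (s : Fin w → ZMod 2) : Fin v → ZMod 2 :=
  fun j => if j ∈ (univ.filter (s · = 1)).image g then 1 else 0

theorem pushforward_eq_one_iff (g : Fin w → Fin v) (s : Fin w → ZMod 2) (j : Fin v) :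
    pushforward g s j = 1 ↔ ∃ k, s k = 1 ∧ g k = j := by
  unfold pushforward
  split_ifs with hj
  · simpa using hj
  · simpa [eq_comm] using hj

theorem size_pushforward_le (g : Fin w → Fin v) (s : Fin w → ZMod 2) :
    size (pushforward g s) ≤ size s := by
  have hsupp : univ.filter (pushforward g s · = 1) = (univ.filter (s · = 1)).image g := by
    ext j
    simp [pushforward_eq_one_iff]
  unfold size
  rw [hsupp]
  exact card_image_le

theorem forall_comp_eq_one_iff_pushforward (g : Fin w → Fin v) (s : Fin w → ZMod 2)
    (x : Fin v → ZMod 2) :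
    (∀ k, s k = 1 → (x ∘ g) k = 1) ↔ ∀ j, pushforward g s j = 1 → x j = 1 := by
  simp only [pushforward_eq_one_iff, Function.comp_apply]
  grind

end Pushforward

theorem IsTrade.image_comp_of_surjective {t v w : ℕ} {T0 T1 : Finset (Fin v → ZMod 2)}
    {g : Fin w → Fin v} (hg : Function.Surjective g) (h : IsTrade t v T0 T1) :
    IsTrade t w (T0.image (· ∘ g)) (T1.image (· ∘ g)) := by
  have hinj : Function.Injective fun x : Fin v → ZMod 2 => x ∘ g :=
    hg.injective_comp_right
  have hcount : ∀ (T : Finset (Fin v → ZMod 2)) (s : Fin w → ZMod 2),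
      ((T.image (· ∘ g)).filter fun y => ∀ k, s k = 1 → y k = 1).card =
        (T.filter fun x => ∀ j, pushforward g s j = 1 → x j = 1).card := by
    intro T s
    rw [filter_image, card_image_of_injective _ hinj]
    simp only [← forall_comp_eq_one_iff_pushforward]
  refine ⟨(disjoint_image hinj).mpr h.1, fun s hs => ?_⟩
  rw [hcount, hcount]
  exact h.2 _ ((size_pushforward_le g s).trans hs)

theorem snoc_self_apply_eq_comp {α : Type*} {v : ℕ} (x : Fin v → α) (i : Fin v) :
    (Fin.snoc x (x i) : Fin (v + 1) → α) = x ∘ Fin.lastCases i id := by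
  funext j
  induction j using Fin.lastCases <;> simp

theorem lastCases_id_surjective {v : ℕ} (i : Fin v) :
    Function.Surjective (Fin.lastCases i id : Fin (v + 1) → Fin v) :=
  fun j => ⟨j.castSucc, by simp⟩

/-- duplicating the `i`-th coordinate of every block
(replacing `(x_1,…,x_v)` by `(x_1,…,x_v,x_i)`) transforms a `[t]`-trade on the
`v`-cube into a `[t]`-trade on the `(v+1)`-cube. -/
theorem tTrade_duplicate_coordinate (v t : ℕ) (T0 T1 : Finset (Fin v → ZMod 2))
    (i : Fin v) (h : IsTrade t v T0 T1) :
    IsTrade t (v + 1)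
      (T0.image (fun x => Fin.snoc x (x i)))
      (T1.image (fun x => Fin.snoc x (x i))) := by
  simp only [snoc_self_apply_eq_comp]
  exact h.image_comp_of_surjective (lastCases_id_surjective i)
end

section
/- Let {T0, T1} be a [t]-trade on 2^V with |V| = v. Then the pair {T̂0, T̂1} obtained by replacing every block (x_1,…,x_v) of T0 and of T1 by the 2v-tuple (x_1,…,x_v, x_1+1,…,x_v+1) (appending the complemented tuple) is a t-(2v,v) trade: it is a [t]-trade on the 2v-cube all of whose blocks have size exactly v. -/
/-!
A block `s` of the `2v`-cube, split as `(a, b)`, lies in the doubled block `(x, x + 1)` exactly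
when `x` contains the support `A` of `a` and avoids the support `B` of `b`. If `A` and `B` meet,
no block does so; otherwise, peeling off one point of `B` at a time
(`#{x ⊇ A, x ∩ (B ∪ {c}) = ∅} = #{x ⊇ A, x ∩ B = ∅} - #{x ⊇ A ∪ {c}, x ∩ B = ∅}`)
expresses these counts through the numbers of blocks containing sets of size at most
`#A + #B ≤ t`, on which `T0` and `T1` agree.
-/

open Finset

lemma ZMod.two_eq_zero_or_one (a : ZMod 2) : a = 0 ∨ a = 1 := by
  revert a; decide

section Counting

variable {v : ℕ}

def support (x : Fin v → ZMod 2) : Finset (Fin v) :=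
  univ.filter (fun j => x j = 1)

def countContainingAvoiding (T : Finset (Fin v → ZMod 2)) (A B : Finset (Fin v)) : ℕ :=
  #(T.filter (fun x => (∀ j ∈ A, x j = 1) ∧ ∀ j ∈ B, x j = 0))

lemma countContainingAvoiding_insert_add (T : Finset (Fin v → ZMod 2)) (A B : Finset (Fin v))
    (c : Fin v) :
    countContainingAvoiding T A (insert c B) + countContainingAvoiding T (insert c A) B =
      countContainingAvoiding T A B := by
  unfold countContainingAvoiding
  conv_rhs => rw [← card_filter_add_card_filter_not (fun x => x c = 0), filter_filter, filter_filter]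
  congr 2 <;> ext x <;> simp only [mem_filter, mem_insert, forall_eq_or_imp]
  · tauto
  · have : x c = 1 ↔ ¬x c = 0 := by rcases ZMod.two_eq_zero_or_one (x c) with h | h <;> simp [h]
    rw [this]
    tauto

lemma countContainingAvoiding_eq_zero_of_not_disjoint (T : Finset (Fin v → ZMod 2))
    {A B : Finset (Fin v)} (hAB : ¬Disjoint A B) : countContainingAvoiding T A B = 0 := by
  obtain ⟨c, hcA, hcB⟩ := not_disjoint_iff.mp hAB
  rw [countContainingAvoiding, card_eq_zero, filter_eq_empty_iff]
  rintro x - ⟨hA, hB⟩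
  simpa [hB c hcB] using hA c hcA

end Counting

namespace IsTrade

variable {t v : ℕ} {T0 T1 : Finset (Fin v → ZMod 2)}

lemma card_filter_superset_eq (h : IsTrade t v T0 T1) {A : Finset (Fin v)} (hA : #A ≤ t) :
    #(T0.filter (fun x => ∀ j ∈ A, x j = 1)) = #(T1.filter (fun x => ∀ j ∈ A, x j = 1)) := by
  have hsupp : support (fun j => if j ∈ A then (1 : ZMod 2) else 0) = A := by
    ext j; by_cases hj : j ∈ A <;> simp [support, hj]
  simpa using h.2 _ ((congrArg card hsupp).trans_le hA)

lemma countContainingAvoiding_eq (h : IsTrade t v T0 T1) (B : Finset (Fin v)) :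
    ∀ A : Finset (Fin v), #A + #B ≤ t →
      countContainingAvoiding T0 A B = countContainingAvoiding T1 A B := by
  induction B using Finset.induction_on with
  | empty =>
    intro A hA
    simpa [countContainingAvoiding] using h.card_filter_superset_eq (A := A) (by simpa using hA)
  | insert c B hcB ih =>
    intro A hAB
    rw [card_insert_of_notMem hcB] at hAB
    have hA := ih A (by omega)
    have hcA := ih (insert c A) (by grw [card_insert_le]; omega)
    have e0 := countContainingAvoiding_insert_add T0 A B c
    have e1 := countContainingAvoiding_insert_add T1 A B c
    omega

end IsTrade

section Doubling

variable {v : ℕ}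

def double (x : Fin v → ZMod 2) : Fin (v + v) → ZMod 2 :=
  Fin.append x (fun j => x j + 1)

lemma double_injective : Function.Injective (double (v := v)) := by
  intro x y hxy
  funext j
  simpa [double] using congrFun hxy (Fin.castAdd v j)

lemma size_append {w : ℕ} (a : Fin v → ZMod 2) (b : Fin w → ZMod 2) :
    size (Fin.append a b) = size a + size b := by
  simp only [size, card_filter, Fin.sum_univ_add, Fin.append_left, Fin.append_right]

lemma size_add_size_add_one (x : Fin v → ZMod 2) : size x + size (fun j => x j + 1) = v := by
  have hpoint : ∀ a : ZMod 2, ((if a = 1 then 1 else 0) + if a + 1 = 1 then 1 else 0 : ℕ) = 1 := by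
    decide
  simp only [size, card_filter, ← sum_add_distrib, hpoint, sum_const, card_univ, Fintype.card_fin,
    smul_eq_mul, mul_one]

lemma size_double (x : Fin v → ZMod 2) : size (double x) = v := by
  rw [double, size_append, size_add_size_add_one]

lemma append_subset_double_iff (a b x : Fin v → ZMod 2) :
    (∀ j, Fin.append a b j = 1 → double x j = 1) ↔
      (∀ j ∈ support a, x j = 1) ∧ ∀ j ∈ support b, x j = 0 := by
  simp only [Fin.forall_fin_add, double, Fin.append_left, Fin.append_right, support, mem_filter,
    mem_univ, true_and, add_eq_right]

lemma card_filter_image_double (T : Finset (Fin v → ZMod 2)) (a b : Fin v → ZMod 2) :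
    #((T.image double).filter (fun y => ∀ j, Fin.append a b j = 1 → y j = 1)) =
      countContainingAvoiding T (support a) (support b) := by
  rw [filter_image, card_image_of_injective _ double_injective, countContainingAvoiding]
  simp only [append_subset_double_iff]

end Doubling

lemma IsTrade.image_double {t v : ℕ} {T0 T1 : Finset (Fin v → ZMod 2)} (h : IsTrade t v T0 T1) :
    IsTrade t (v + v) (T0.image double) (T1.image double) := by
  refine ⟨(disjoint_image double_injective).mpr h.1, fun s hs => ?_⟩
  obtain ⟨a, b, rfl⟩ : ∃ a b, Fin.append a b = s := ⟨_, _, Fin.append_castAdd_natAdd⟩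
  rw [size_append] at hs
  rw [card_filter_image_double, card_filter_image_double]
  by_cases hAB : Disjoint (support a) (support b)
  · exact h.countContainingAvoiding_eq _ _ hs
  · rw [countContainingAvoiding_eq_zero_of_not_disjoint T0 hAB,
      countContainingAvoiding_eq_zero_of_not_disjoint T1 hAB]

/-- replacing every block `(x_1,…,x_v)` of a `[t]`-trade by the
`2v`-tuple `(x_1,…,x_v,x_1+1,…,x_v+1)` yields a `t-(2v,v)` trade: a `[t]`-trade
on the `2v`-cube all of whose blocks have size exactly `v`. -/
theorem tTrade_double (v t : ℕ) (T0 T1 : Finset (Fin v → ZMod 2))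
    (h : IsTrade t v T0 T1) :
    IsTrade t (v + v)
      (T0.image (fun x => Fin.append x (fun j => x j + 1)))
      (T1.image (fun x => Fin.append x (fun j => x j + 1))) ∧
    ∀ y ∈ T0.image (fun x => Fin.append x (fun j => x j + 1)) ∪
          T1.image (fun x => Fin.append x (fun j => x j + 1)),
      size y = v := by
  refine ⟨h.image_double, fun y hy => ?_⟩
  rw [mem_union, mem_image, mem_image] at hy
  obtain ⟨x, -, rfl⟩ | ⟨x, -, rfl⟩ := hy <;> exact size_double x
end

section
/- Let {T0, T1} be a [t]-trade on 2^V with |V| = v and t < v. Then the characteristic Boolean function of T0 ∪ T1 belongs to the Reed–Muller code RM(v−t−1, v); that is, it is representable as a multivariate polynomial over F_2 in the variables x_1,…,x_v of total degree at most v−t−1. -/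
/-- The Reed–Muller code `RM(r,v)`: Boolean functions representable by a
polynomial over `F_2` of total degree at most `r`. -/
def RM (r v : ℕ) (f : (Fin v → ZMod 2) → ZMod 2) : Prop :=
  ∃ P : MvPolynomial (Fin v) (ZMod 2),
    P.totalDegree ≤ r ∧ ∀ x, MvPolynomial.eval x P = f x

namespace TTradeAux

variable {v : ℕ}

lemma zmod2_cases (a : ZMod 2) : a = 0 ∨ a = 1 := by revert a; decide

/-- The support of a vector of `F_2^v` as a finset. -/
def supp (x : Fin v → ZMod 2) : Finset (Fin v) :=
  Finset.univ.filter (fun j => x j = 1)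

lemma mem_supp {x : Fin v → ZMod 2} {j : Fin v} : j ∈ supp x ↔ x j = 1 := by
  simp [supp]

lemma supp_inj : Function.Injective (supp (v := v)) := by
  intro x y h
  funext j
  have : x j = 1 ↔ y j = 1 := by rw [← mem_supp, ← mem_supp, h]
  rcases zmod2_cases (x j) with hx | hx <;> rcases zmod2_cases (y j) with hy | hy <;> simp_all

lemma prod_eq_ite (x : Fin v → ZMod 2) (S : Finset (Fin v)) :
    (∏ j ∈ S, x j) = if S ⊆ supp x then 1 else 0 := by
  split_ifs with hs
  · exact Finset.prod_eq_one fun j hj => mem_supp.mp (hs hj)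
  · obtain ⟨j, hj, hj'⟩ := by
      simpa [Finset.subset_iff, mem_supp] using hs
    refine Finset.prod_eq_zero hj ?_
    rcases zmod2_cases (x j) with h | h
    · exact h
    · exact absurd h hj'

lemma card_powerset_filter (B A : Finset (Fin v)) (h : B ⊆ A) :
    (A.powerset.filter (fun S => B ⊆ S)).card = 2 ^ (A.card - B.card) := by
  rw [← Finset.Icc_eq_filter_powerset, Finset.card_Icc_finset h]

/-- The ANF (algebraic normal form) coefficient of `f` at `S`. -/
def coefANF (f : (Fin v → ZMod 2) → ZMod 2) (S : Finset (Fin v)) : ZMod 2 :=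
  ∑ y : Fin v → ZMod 2, if supp y ⊆ S then f y else 0

/-- The ANF polynomial restricted to monomials of degree ≤ r. -/
noncomputable def anfPoly (f : (Fin v → ZMod 2) → ZMod 2) (r : ℕ) :
    MvPolynomial (Fin v) (ZMod 2) :=
  ∑ S ∈ Finset.univ.filter (fun S : Finset (Fin v) => S.card ≤ r),
    MvPolynomial.C (coefANF f S) * ∏ j ∈ S, MvPolynomial.X j

lemma anfPoly_totalDegree (f : (Fin v → ZMod 2) → ZMod 2) (r : ℕ) :
    (anfPoly f r).totalDegree ≤ r := by
  refine (MvPolynomial.totalDegree_finset_sum _ _).trans ?_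
  refine Finset.sup_le fun S hS => ?_
  have hc : S.card ≤ r := (Finset.mem_filter.mp hS).2
  calc (MvPolynomial.C (coefANF f S) * ∏ j ∈ S, MvPolynomial.X j).totalDegree
      ≤ (MvPolynomial.C (coefANF f S) : MvPolynomial (Fin v) (ZMod 2)).totalDegree
        + (∏ j ∈ S, MvPolynomial.X j : MvPolynomial (Fin v) (ZMod 2)).totalDegree :=
        MvPolynomial.totalDegree_mul _ _
    _ ≤ 0 + ∑ j ∈ S, (MvPolynomial.X j : MvPolynomial (Fin v) (ZMod 2)).totalDegree := by
        gcongr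
        · exact le_of_eq (MvPolynomial.totalDegree_C _)
        · exact MvPolynomial.totalDegree_finset_prod _ _
    _ ≤ r := by
        simp only [MvPolynomial.totalDegree_X, zero_add, Finset.sum_const, smul_eq_mul, mul_one]
        exact hc

lemma eval_anfPoly (f : (Fin v → ZMod 2) → ZMod 2) (r : ℕ)
    (hvan : ∀ S : Finset (Fin v), r < S.card → coefANF f S = 0)
    (x : Fin v → ZMod 2) :
    MvPolynomial.eval x (anfPoly f r) = f x := by
  have h1 : MvPolynomial.eval x (anfPoly f r)
      = ∑ S ∈ Finset.univ.filter (fun S : Finset (Fin v) => S.card ≤ r),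
          coefANF f S * (if S ⊆ supp x then 1 else 0) := by
    simp [anfPoly, prod_eq_ite]
  rw [h1]
  have h2 : (∑ S ∈ Finset.univ.filter (fun S : Finset (Fin v) => S.card ≤ r),
          coefANF f S * (if S ⊆ supp x then 1 else 0))
      = ∑ S : Finset (Fin v), coefANF f S * (if S ⊆ supp x then 1 else 0) := by
    refine Finset.sum_subset (Finset.filter_subset _ _) fun S _ hS => ?_
    have : r < S.card := by
      by_contra hle
      exact hS (Finset.mem_filter.mpr ⟨Finset.mem_univ _, not_lt.mp hle⟩)
    rw [hvan S this, zero_mul]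
  rw [h2]
  have h3 : (∑ S : Finset (Fin v), coefANF f S * (if S ⊆ supp x then 1 else 0))
      = ∑ S ∈ (supp x).powerset, coefANF f S := by
    calc (∑ S : Finset (Fin v), coefANF f S * (if S ⊆ supp x then 1 else 0))
        = ∑ S ∈ Finset.univ.filter (fun S : Finset (Fin v) => S ⊆ supp x), coefANF f S := by
          simp only [mul_ite, mul_one, mul_zero]
          rw [← Finset.sum_filter]
      _ = ∑ S ∈ (supp x).powerset, coefANF f S := by
          congr 1
          ext S
          simp
  rw [h3]
  simp only [coefANF]
  rw [Finset.sum_comm]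
  have h4 : ∀ y : Fin v → ZMod 2,
      (∑ S ∈ (supp x).powerset, if supp y ⊆ S then f y else 0)
      = ((supp x).powerset.filter (fun S => supp y ⊆ S)).card • f y := by
    intro y
    rw [← Finset.sum_filter, Finset.sum_const]
  rw [Finset.sum_congr rfl fun y _ => h4 y]
  rw [Finset.sum_eq_single x]
  · have : ((supp x).powerset.filter (fun S => supp x ⊆ S)).card = 1 := by
      rw [card_powerset_filter _ _ (subset_refl _)]
      simp
    rw [this, one_smul]
  · intro y _ hy
    by_cases hsub : supp y ⊆ supp x
    · have hne : supp y ≠ supp x := fun e => hy (supp_inj e)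
      have hlt : (supp y).card < (supp x).card :=
        Finset.card_lt_card (ssubset_of_subset_of_ne hsub hne)
      rw [card_powerset_filter _ _ hsub]
      obtain ⟨k, hk⟩ : ∃ k, (supp x).card - (supp y).card = k + 1 :=
        ⟨(supp x).card - (supp y).card - 1, by omega⟩
      rw [hk, nsmul_eq_mul]
      have : ((2 ^ (k + 1) : ℕ) : ZMod 2) = 0 :=
        (ZMod.natCast_eq_zero_iff _ 2).mpr ⟨2 ^ k, by ring⟩
      rw [this, zero_mul]
    · have : ((supp x).powerset.filter (fun S => supp y ⊆ S)).card = 0 := by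
        rw [Finset.card_eq_zero, Finset.filter_eq_empty_iff]
        intro S hS hsub'
        exact hsub (hsub'.trans (Finset.mem_powerset.mp hS))
      rw [this, zero_smul]
  · intro hx
    exact absurd (Finset.mem_univ x) hx

lemma trade_count {t : ℕ} {T0 T1 : Finset (Fin v → ZMod 2)} (h : IsTrade t v T0 T1) :
    ∀ u w : Finset (Fin v), Disjoint u w → u.card + w.card ≤ t →
      (T0.filter (fun x => (∀ j ∈ w, x j = 1) ∧ ∀ j ∈ u, x j = 0)).card =
      (T1.filter (fun x => (∀ j ∈ w, x j = 1) ∧ ∀ j ∈ u, x j = 0)).card := by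
  intro u
  induction u using Finset.induction_on with
  | empty =>
    intro w _ hcard
    have hsize : size (fun j => if j ∈ w then (1 : ZMod 2) else 0) = w.card := by
      unfold size
      congr 1
      ext j
      by_cases hj : j ∈ w <;> simp [hj]
    have hs := h.2 (fun j => if j ∈ w then 1 else 0) (by omega)
    have hpred : ∀ T : Finset (Fin v → ZMod 2),
        T.filter (fun x => (∀ j ∈ w, x j = 1) ∧ ∀ j ∈ (∅ : Finset (Fin v)), x j = 0)
        = T.filter (fun x => ∀ j, (if j ∈ w then (1 : ZMod 2) else 0) = 1 → x j = 1) := by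
      intro T
      refine Finset.filter_congr fun x _ => ?_
      constructor
      · rintro ⟨h1, -⟩ j hj
        by_cases hw : j ∈ w
        · exact h1 j hw
        · simp [hw] at hj
      · intro h1
        exact ⟨fun j hj => h1 j (by simp [hj]), by simp⟩
    rw [hpred T0, hpred T1]
    exact hs
  | @insert a u' ha ih =>
    intro w hdisj hcard
    rw [Finset.disjoint_insert_left] at hdisj
    obtain ⟨haw, hdisj'⟩ := hdisj
    have hdisj'' : Disjoint u' (insert a w) := by
      rw [Finset.disjoint_insert_right]
      exact ⟨ha, hdisj'⟩
    have hcardins : (insert a u').card = u'.card + 1 := Finset.card_insert_of_notMem ha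
    have hcardw : (insert a w).card = w.card + 1 := Finset.card_insert_of_notMem haw
    have hc1 : u'.card + w.card ≤ t := by omega
    have hc2 : u'.card + (insert a w).card ≤ t := by omega
    have i1 := ih w hdisj' hc1
    have i2 := ih (insert a w) hdisj'' hc2
    have split : ∀ T : Finset (Fin v → ZMod 2),
        (T.filter (fun x => ((∀ j ∈ w, x j = 1) ∧ ∀ j ∈ u', x j = 0) ∧ x a = 1)).card
        + (T.filter (fun x => ((∀ j ∈ w, x j = 1) ∧ ∀ j ∈ u', x j = 0) ∧ ¬ x a = 1)).card
        = (T.filter (fun x => (∀ j ∈ w, x j = 1) ∧ ∀ j ∈ u', x j = 0)).card := by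
      intro T
      have key := Finset.card_filter_add_card_filter_not
        (s := T.filter (fun x => (∀ j ∈ w, x j = 1) ∧ ∀ j ∈ u', x j = 0))
        (p := fun x => x a = 1)
      rw [Finset.filter_filter, Finset.filter_filter] at key
      exact key
    have e1 : ∀ T : Finset (Fin v → ZMod 2),
        T.filter (fun x => ((∀ j ∈ w, x j = 1) ∧ ∀ j ∈ u', x j = 0) ∧ x a = 1)
        = T.filter (fun x => (∀ j ∈ insert a w, x j = 1) ∧ ∀ j ∈ u', x j = 0) := by
      intro T
      refine Finset.filter_congr fun x _ => ?_
      simp only [Finset.mem_insert]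
      constructor
      · rintro ⟨⟨h1, h2⟩, h3⟩
        exact ⟨fun j hj => hj.elim (fun e => e ▸ h3) (h1 j), h2⟩
      · rintro ⟨h1, h2⟩
        exact ⟨⟨fun j hj => h1 j (Or.inr hj), h2⟩, h1 a (Or.inl rfl)⟩
    have e2 : ∀ T : Finset (Fin v → ZMod 2),
        T.filter (fun x => ((∀ j ∈ w, x j = 1) ∧ ∀ j ∈ u', x j = 0) ∧ ¬ x a = 1)
        = T.filter (fun x => (∀ j ∈ w, x j = 1) ∧ ∀ j ∈ insert a u', x j = 0) := by
      intro T
      refine Finset.filter_congr fun x _ => ?_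
      simp only [Finset.mem_insert]
      constructor
      · rintro ⟨⟨h1, h2⟩, h3⟩
        refine ⟨h1, fun j hj => hj.elim (fun e => ?_) (h2 j)⟩
        subst e
        rcases zmod2_cases (x j) with hz | hz
        · exact hz
        · exact absurd hz h3
      · rintro ⟨h1, h2⟩
        have hz := h2 a (Or.inl rfl)
        refine ⟨⟨h1, fun j hj => h2 j (Or.inr hj)⟩, ?_⟩
        rw [hz]
        decide
    have s0 := split T0
    have s1 := split T1
    rw [e1 T0, e2 T0] at s0
    rw [e1 T1, e2 T1] at s1
    have hAB := s0.trans (i1.trans s1.symm)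
    rw [← i2] at hAB
    exact Nat.add_left_cancel hAB

lemma coef_vanish {t : ℕ} (htv : t < v) {T0 T1 : Finset (Fin v → ZMod 2)}
    (h : IsTrade t v T0 T1) (S : Finset (Fin v)) (hS : v - t - 1 < S.card) :
    coefANF (fun x => if x ∈ T0 ∪ T1 then 1 else 0) S = 0 := by
  show (∑ y : Fin v → ZMod 2,
      if supp y ⊆ S then (if y ∈ T0 ∪ T1 then (1 : ZMod 2) else 0) else 0) = 0
  have step1 : (∑ y : Fin v → ZMod 2,
        if supp y ⊆ S then (if y ∈ T0 ∪ T1 then (1 : ZMod 2) else 0) else 0)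
      = (((T0 ∪ T1).filter (fun y => supp y ⊆ S)).card : ZMod 2) := by
    simp only [← ite_and]
    rw [Finset.sum_boole]
    congr 1
    congr 1
    ext y
    simp [Finset.mem_filter, and_comm]
  rw [step1, Finset.filter_union,
    Finset.card_union_of_disjoint (Finset.disjoint_filter_filter h.1)]
  have hucard : (Sᶜ : Finset (Fin v)).card + (∅ : Finset (Fin v)).card ≤ t := by
    have h1 : (Sᶜ : Finset (Fin v)).card = Fintype.card (Fin v) - S.card := Finset.card_compl S
    have h2 : Fintype.card (Fin v) = v := Fintype.card_fin v
    have h3 : S.card ≤ v := by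
      have := Finset.card_le_card (Finset.subset_univ S)
      simpa [h2] using this
    simp only [Finset.card_empty]
    omega
  have htrade := trade_count h Sᶜ ∅ (by simp) hucard
  have hconv : ∀ T : Finset (Fin v → ZMod 2),
      T.filter (fun y => supp y ⊆ S) =
      T.filter (fun x => (∀ j ∈ (∅ : Finset (Fin v)), x j = 1) ∧ ∀ j ∈ Sᶜ, x j = 0) := by
    intro T
    refine Finset.filter_congr fun x _ => ?_
    constructor
    · intro hsub
      refine ⟨by simp, fun j hj => ?_⟩
      rcases zmod2_cases (x j) with hz | hz
      · exact hz
      · exact absurd (hsub (mem_supp.mpr hz)) (Finset.mem_compl.mp hj)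
    · rintro ⟨-, h2⟩ j hj
      by_contra hjS
      have hz := h2 j (Finset.mem_compl.mpr hjS)
      rw [mem_supp] at hj
      rw [hj] at hz
      exact one_ne_zero hz
  rw [hconv T0, hconv T1, htrade]
  exact (ZMod.natCast_eq_zero_iff _ 2).mpr
    ⟨(T1.filter (fun x => (∀ j ∈ (∅ : Finset (Fin v)), x j = 1) ∧ ∀ j ∈ Sᶜ, x j = 0)).card,
      by ring⟩

end TTradeAux

/-- the characteristic Boolean function of the union of the legs of a
`[t]`-trade belongs to the Reed–Muller code `RM(v-t-1, v)`. -/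
theorem tTrade_charFun_mem_RM (v t : ℕ) (htv : t < v)
    (T0 T1 : Finset (Fin v → ZMod 2)) (h : IsTrade t v T0 T1) :
    RM (v - t - 1) v (fun x => if x ∈ T0 ∪ T1 then 1 else 0) := by
  refine ⟨TTradeAux.anfPoly (fun x => if x ∈ T0 ∪ T1 then 1 else 0) (v - t - 1),
    TTradeAux.anfPoly_totalDegree _ _, ?_⟩
  intro x
  exact TTradeAux.eval_anfPoly _ _ (fun S hS => TTradeAux.coef_vanish htv h S hS) x
end

section
/- Let T ⊆ F_2^v be an affine subspace of dimension t+1. Then T can be split into a [t]-trade {T0, T1} with T0 ∪ T1 = T if and only if T is a translation of the linear span of a basis consisting of t+1 vectors with pairwise disjoint supports. -/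
/-! Write `T = {a + ε ᵥ* M}` where the rows of `M` form a basis of the direction of `T`, so that
`T` is parametrised by `ε ∈ F₂^(t+1)`.

If the rows have disjoint supports, split `T` by the parity of `ε`: a set `s` of at most `t`
coordinates misses the support of some row `i`, and flipping `ε i` exchanges the vectors above `s`
in the two halves.

Conversely, write `f ε = ±1` according to which half of a trade contains `a + ε ᵥ* M`.
Expanding `(-1)^b = 1 - 2b` by inclusion–exclusion turns the trade condition into the vanishing
of the Fourier coefficient of `f` at every sum of at most `t` columns of `M`. The columns span
`F₂^(t+1)`; if they had a nonzero value outside a basis chosen among them, every vector would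
be such a sum, and Fourier inversion would give `f 0 = 0`, which is absurd. So every nonzero
column is one of `t + 1` independent values, and the indicators of the column classes form a
basis of the row space with disjoint supports. -/

open Finset Matrix Submodule

lemma AddChar.map_sum_eq_prod {A M ι : Type*} [AddCommMonoid A] [CommMonoid M]
    (ψ : AddChar A M) (s : Finset ι) (x : ι → A) :
    ψ (∑ i ∈ s, x i) = ∏ i ∈ s, ψ (x i) :=
  map_prod ψ.toMonoidHom (fun i => Multiplicative.ofAdd (x i)) s

def signChar : AddChar (ZMod 2) ℤ := AddChar.zmodChar 2 (by norm_num : (-1 : ℤ) ^ 2 = 1)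

lemma signChar_one : signChar 1 = -1 := rfl

lemma signChar_eq_ite (b : ZMod 2) : signChar b = (if b = 1 then -2 else 0) + 1 := by
  fin_cases b <;> rfl

lemma sum_signChar_dotProduct {m : Type*} [Fintype m] [DecidableEq m] (ε : m → ZMod 2) :
    ∑ η, signChar (ε ⬝ᵥ η) =
      if ε = 0 then (Fintype.card (m → ZMod 2) : ℤ) else 0 := by
  split_ifs with hε
  · simp [hε]
  let ψ : AddChar (m → ZMod 2) ℤ :=
    signChar.compAddMonoidHom (AddMonoidHom.mk' (ε ⬝ᵥ ·) (dotProduct_add ε))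
  obtain ⟨i, hi⟩ := Function.ne_iff.1 hε
  refine (AddChar.sum_eq_zero_iff_ne_zero (ψ := ψ)).2
    (AddChar.ne_zero_iff.2 ⟨(Pi.single i 1 : m → ZMod 2), ?_⟩)
  have hi : ε i = 1 := Fin.eq_one_of_ne_zero (ε i) hi
  simp [ψ, hi, signChar_one]

lemma apply_zero_eq_zero_of_forall_sum_mul_signChar_eq_zero {m : Type*} [Fintype m]
    [DecidableEq m] (f : (m → ZMod 2) → ℤ)
    (h : ∀ η, ∑ ε, f ε * signChar (ε ⬝ᵥ η) = 0) : f 0 = 0 := by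
  have : ∑ η, ∑ ε, f ε * signChar (ε ⬝ᵥ η) = f 0 * Fintype.card (m → ZMod 2) := by
    rw [Finset.sum_comm]
    simp [← Finset.mul_sum, sum_signChar_dotProduct]
  rw [Finset.sum_eq_zero (fun η _ => h η)] at this
  simpa using this.symm

theorem sum_signChar_sum_eq {ι : Type*} [DecidableEq ι] (T : Finset (ι → ZMod 2))
    (A : Finset ι) :
    ∑ x ∈ T, signChar (∑ c ∈ A, x c) =
      ∑ B ∈ A.powerset, (-2 : ℤ) ^ #B * #{x ∈ T | ∀ c ∈ B, x c = 1} := by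
  have expand (x : ι → ZMod 2) : signChar (∑ c ∈ A, x c) =
      ∑ B ∈ A.powerset, (-2 : ℤ) ^ #B * if ∀ c ∈ B, x c = 1 then 1 else 0 := by
    simp_rw [AddChar.map_sum_eq_prod, signChar_eq_ite, prod_add, prod_const_one, mul_one]
    simp_rw [← prod_boole, ← prod_const, ← prod_mul_distrib]
    refine sum_congr rfl fun B _ => prod_congr rfl fun c _ => ?_
    exact (mul_boole _ _).symm
  simp_rw [expand, sum_comm (s := T), ← mul_sum, sum_boole]

theorem IsTrade.card_filter_eq {t v : ℕ} {T0 T1 : Finset (Fin v → ZMod 2)}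
    (h : IsTrade t v T0 T1) {B : Finset (Fin v)} (hB : #B ≤ t) :
    #{x ∈ T0 | ∀ c ∈ B, x c = 1} = #{x ∈ T1 | ∀ c ∈ B, x c = 1} := by
  have hsize : size (fun c => if c ∈ B then 1 else 0) = #B := by
    simp [size]
  have hiff (x : Fin v → ZMod 2) :
      (∀ c, (if c ∈ B then 1 else 0 : ZMod 2) = 1 → x c = 1) ↔ ∀ c ∈ B, x c = 1 := by
    simp
  have := h.2 _ (hsize ▸ hB)
  rwa [filter_congr fun x _ => hiff x, filter_congr fun x _ => hiff x] at this

theorem IsTrade.sum_signChar_eq {t v : ℕ} {T0 T1 : Finset (Fin v → ZMod 2)}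
    (h : IsTrade t v T0 T1) {A : Finset (Fin v)} (hA : #A ≤ t) :
    ∑ x ∈ T0, signChar (∑ c ∈ A, x c) = ∑ x ∈ T1, signChar (∑ c ∈ A, x c) := by
  simp_rw [sum_signChar_sum_eq]
  refine sum_congr rfl fun B hB => ?_
  congr 2
  convert h.card_filter_eq ((card_le_card (mem_powerset.1 hB)).trans hA)

theorem Matrix.span_range_col_eq_top {K m n : Type*} [Field K] [Fintype m] [Fintype n]
    {M : Matrix m n K} (h : LinearIndependent K M.row) : span K (Set.range M.col) = ⊤ :=
  eq_top_of_finrank_eq <| by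
    rw [← rank_eq_finrank_span_cols, h.rank_matrix, Module.finrank_fintype_fun_eq_card]

theorem exists_finset_sum_eq_of_mem_span {V m : Type*} [Fintype m] [AddCommGroup V]
    [Module (ZMod 2) V] {g : m → V} {x : V} (hx : x ∈ span (ZMod 2) (Set.range g)) :
    ∃ C : Finset m, ∑ k ∈ C, g k = x := by
  classical
  obtain ⟨ε, rfl⟩ := (mem_span_range_iff_exists_fun (ZMod 2)).1 hx
  refine ⟨({k | ε k = 1} : Finset m), ?_⟩
  rw [sum_filter]
  refine sum_congr rfl fun k _ => ?_
  obtain h | h : ε k = 0 ∨ ε k = 1 := by generalize ε k = b; decide +revert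
  all_goals simp [h]

theorem exists_finset_card_lt_sum_eq {ι m V : Type*} [Fintype m] [AddCommGroup V]
    [Module (ZMod 2) V] (f : ι → V) (ρ : m → ι) (hρ : LinearIndependent (ZMod 2) (f ∘ ρ))
    (hspan : span (ZMod 2) (Set.range (f ∘ ρ)) = ⊤) {u : ι} (hu0 : f u ≠ 0)
    (hu : f u ∉ Set.range (f ∘ ρ)) (x : V) :
    ∃ A : Finset ι, #A < Fintype.card m ∧ ∑ c ∈ A, f c = x := by
  classical
  let e : m ↪ ι := ⟨ρ, hρ.injective.of_comp⟩
  obtain ⟨C, rfl⟩ := exists_finset_sum_eq_of_mem_span (hspan ▸ mem_top : x ∈ _)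
  by_cases hC : C = univ
  swap
  · exact ⟨C.map e, by rwa [card_map, card_lt_iff_ne_univ], sum_map C e f⟩
  -- `x` needs the whole basis: replace the basis vectors summing to `f u` by `u` itself.
  obtain ⟨D, hD⟩ := exists_finset_sum_eq_of_mem_span (hspan ▸ mem_top : f u ∈ _)
  have hD2 : 2 ≤ #D := by
    by_contra! hlt
    obtain hD0 | hD1 : #D = 0 ∨ #D = 1 := by omega
    · rw [card_eq_zero] at hD0
      exact hu0 (by simpa [hD0] using hD.symm)
    · obtain ⟨k, rfl⟩ := card_eq_one.1 hD1
      exact hu ⟨k, by simpa using hD⟩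
  have hu' : u ∉ Dᶜ.map e := fun hmem => by
    obtain ⟨k, -, rfl⟩ := mem_map.1 hmem
    exact hu ⟨k, rfl⟩
  refine ⟨insert u (Dᶜ.map e), ?_, ?_⟩
  · rw [card_insert_of_notMem hu', card_map, card_compl]
    have := card_le_univ D
    omega
  · rw [sum_insert hu', sum_map, ← hD, hC]
    exact sum_add_sum_compl D (f ∘ ρ)

theorem Matrix.exists_disjoint_basis_of_forall_col {K ι m : Type*} [Field K] [Fintype m]
    {M : Matrix m ι K} (hM : LinearIndependent K M.row) (ρ : m → ι)
    (hρ : Function.Injective (M.col ∘ ρ))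
    (hcol : ∀ c, M.col c = 0 ∨ M.col c ∈ Set.range (M.col ∘ ρ)) :
    ∃ bs : m → ι → K, LinearIndependent K bs ∧
      (∀ i j, i ≠ j → ∀ c, bs i c = 0 ∨ bs j c = 0) ∧
      span K (Set.range bs) = span K (Set.range M.row) := by
  classical
  have hρ' {j k : m} (h : M.col (ρ j) = M.col (ρ k)) : j = k := hρ h
  let bs : m → ι → K := fun k c => if M.col c = M.col (ρ k) then 1 else 0
  have hbs_ne {j k : m} (hjk : j ≠ k) : bs j (ρ k) = 0 := if_neg fun h => hjk (hρ' h).symm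
  have hind : LinearIndependent K bs := by
    refine Fintype.linearIndependent_iff.2 fun g hg k => ?_
    have := congrFun hg (ρ k)
    rw [Finset.sum_apply, sum_eq_single k (fun j _ hjk => by simp [hbs_ne hjk]) (by simp)] at this
    simpa [bs] using this
  have hdis (i j : m) (hij : i ≠ j) (c : ι) : bs i c = 0 ∨ bs j c = 0 := by
    by_contra! h
    simp only [bs, ne_eq, ite_eq_right_iff, one_ne_zero, imp_false, not_not] at h
    exact hij (hρ' (h.1.symm.trans h.2))
  have hrow (i : m) : M.row i = ∑ k, M i (ρ k) • bs k := by
    funext c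
    simp only [row_apply, Finset.sum_apply, Pi.smul_apply, smul_eq_mul, bs, mul_ite, mul_one,
      mul_zero]
    rcases hcol c with h0 | ⟨k0, hk0 : M.col (ρ k0) = M.col c⟩
    · rw [show M i c = 0 from congrFun h0 i]
      refine (sum_eq_zero fun k _ => ?_).symm
      split_ifs with h
      · exact (congrFun h i).symm.trans (congrFun h0 i)
      · rfl
    · rw [sum_eq_single k0 (fun k _ hk => if_neg fun h => hk (hρ' (hk0.trans h)).symm) (by simp),
        if_pos hk0.symm]
      exact (congrFun hk0 i).symm
  have hle : span K (Set.range M.row) ≤ span K (Set.range bs) :=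
    span_le.2 <| Set.range_subset_iff.2 fun i => hrow i ▸
      sum_mem fun k _ => smul_mem _ _ (subset_span ⟨k, rfl⟩)
  have := FiniteDimensional.span_of_finite K (Set.finite_range bs)
  refine ⟨bs, hind, hdis, (eq_of_le_of_finrank_le hle ?_).symm⟩
  rw [finrank_span_eq_card hind, finrank_span_eq_card hM]

theorem IsTrade.sum_sign_mul_signChar_eq_zero {t v n : ℕ} {T0 T1 : Finset (Fin v → ZMod 2)}
    (h : IsTrade t v T0 T1) (a : Fin v → ZMod 2) {M : Matrix (Fin n) (Fin v) (ZMod 2)}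
    (hM : Function.Injective M.vecMul) (hun : T0 ∪ T1 = univ.image (a + · ᵥ* M))
    {A : Finset (Fin v)} (hA : #A ≤ t) :
    ∑ ε, (if a + ε ᵥ* M ∈ T0 then 1 else -1) * signChar (ε ⬝ᵥ ∑ c ∈ A, M.col c) =
      0 := by
  let χ (x : Fin v → ZMod 2) := signChar (∑ c ∈ A, x c)
  have hsplit : ∑ ε, (if a + ε ᵥ* M ∈ T0 then 1 else -1) * χ (a + ε ᵥ* M) = 0 := by
    calc _ = ∑ x ∈ univ.image (a + · ᵥ* M), (if x ∈ T0 then 1 else -1) * χ x :=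
          (sum_image fun _ _ _ _ hεε' => hM (add_left_cancel hεε')).symm
      _ = ∑ x ∈ T0, χ x - ∑ x ∈ T1, χ x := by
          rw [← hun, sum_union h.1, sub_eq_add_neg, ← sum_neg_distrib]
          congr 1 <;> refine sum_congr rfl fun x hx => ?_
          · simp [hx]
          · simp [disjoint_right.1 h.1 hx]
      _ = 0 := sub_eq_zero.2 (h.sum_signChar_eq hA)
  have hχ (ε : Fin n → ZMod 2) :
      χ (a + ε ᵥ* M) =
        signChar (∑ c ∈ A, a c) * signChar (ε ⬝ᵥ ∑ c ∈ A, M.col c) := by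
    simp only [χ, ← AddChar.map_add_eq_mul, Pi.add_apply, sum_add_distrib, dotProduct_sum]
    rfl
  simp_rw [hχ, mul_left_comm _ (signChar _), ← mul_sum] at hsplit
  exact (mul_eq_zero.1 hsplit).resolve_left (signChar.val_isUnit _).ne_zero

theorem IsTrade.exists_disjoint_basis {t v : ℕ} {T0 T1 : Finset (Fin v → ZMod 2)}
    (h : IsTrade t v T0 T1) (a : Fin v → ZMod 2) {M : Matrix (Fin (t + 1)) (Fin v) (ZMod 2)}
    (hM : LinearIndependent (ZMod 2) M.row) (hun : T0 ∪ T1 = univ.image (a + · ᵥ* M)) :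
    ∃ bs : Fin (t + 1) → Fin v → ZMod 2, LinearIndependent (ZMod 2) bs ∧
      (∀ i j, i ≠ j → ∀ c, ¬(bs i c = 1 ∧ bs j c = 1)) ∧
      span (ZMod 2) (Set.range bs) = span (ZMod 2) (Set.range M.row) := by
  classical
  have hbasis := exists_fun_fin_finrank_span_eq (ZMod 2) (Set.range M.col)
  rw [span_range_col_eq_top hM, finrank_top, Module.finrank_fin_fun] at hbasis
  obtain ⟨r, hr_col, hr_span, hr_ind⟩ := hbasis
  choose ρ hρ using hr_col
  obtain rfl : M.col ∘ ρ = r := funext hρ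
  by_cases hcol : ∀ c, M.col c = 0 ∨ M.col c ∈ Set.range (M.col ∘ ρ)
  · obtain ⟨bs, hind, hdis, hspan⟩ :=
      exists_disjoint_basis_of_forall_col hM ρ hr_ind.injective hcol
    refine ⟨bs, hind, fun i j hij c ⟨hi, hj⟩ => ?_, hspan⟩
    exact (hdis i j hij c).elim (fun h0 => by simp [h0] at hi) (fun h0 => by simp [h0] at hj)
  -- Otherwise the sign function of the trade has all its Fourier coefficients zero.
  push Not at hcol
  obtain ⟨u, hu0, hu⟩ := hcol
  let f (ε : Fin (t + 1) → ZMod 2) : ℤ := if a + ε ᵥ* M ∈ T0 then 1 else -1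
  have hf : f 0 ≠ 0 := by
    simp only [f]
    split_ifs <;> decide
  refine absurd (apply_zero_eq_zero_of_forall_sum_mul_signChar_eq_zero f fun η => ?_) hf
  obtain ⟨A, hA, rfl⟩ := exists_finset_card_lt_sum_eq M.col ρ hr_ind hr_span hu0 hu η
  exact h.sum_sign_mul_signChar_eq_zero a (vecMul_injective_iff.2 hM) hun
    (Nat.lt_succ_iff.1 (by simpa using hA))

theorem exists_forall_eq_zero_of_size_le {t v : ℕ} {bs : Fin (t + 1) → Fin v → ZMod 2}
    (hdis : ∀ i j, i ≠ j → ∀ c, ¬(bs i c = 1 ∧ bs j c = 1)) {s : Fin v → ZMod 2}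
    (hs : size s ≤ t) : ∃ i, ∀ c, s c = 1 → bs i c = 0 := by
  by_contra! h
  choose c hs1 hbs using h
  have hc : Function.Injective c := fun i j hij => by
    by_contra hne
    exact hdis i j hne (c j)
      ⟨hij ▸ Fin.eq_one_of_ne_zero _ (hbs i), Fin.eq_one_of_ne_zero _ (hbs j)⟩
  have := card_le_card_of_injOn (s := univ) (t := {c | s c = 1}) c
    (fun i _ => by simpa using hs1 i) hc.injOn
  simp only [card_univ, Fintype.card_fin] at this
  exact absurd (this.trans hs) (by omega)

theorem exists_isTrade_union_eq {t v : ℕ} (a : Fin v → ZMod 2)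
    {bs : Fin (t + 1) → Fin v → ZMod 2} (hbs : LinearIndependent (ZMod 2) bs)
    (hdis : ∀ i j, i ≠ j → ∀ c, ¬(bs i c = 1 ∧ bs j c = 1)) :
    ∃ T0 T1, IsTrade t v T0 T1 ∧ T0 ∪ T1 = univ.image (a + · ᵥ* Matrix.of bs) := by
  classical
  let g : (Fin (t + 1) → ZMod 2) ↪ (Fin v → ZMod 2) :=
    ⟨(a + · ᵥ* Matrix.of bs), fun _ _ h => vecMul_injective_iff.2 hbs (add_left_cancel h)⟩
  have hg (ε : Fin (t + 1) → ZMod 2) (i : Fin (t + 1)) :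
      g (ε + Pi.single i 1) = g ε + bs i := by
    show a + (ε + Pi.single i 1) ᵥ* of bs = a + ε ᵥ* of bs + bs i
    simp [add_vecMul, add_assoc]
  refine ⟨(univ.filter fun ε => ∑ i, ε i = 0).map g,
    (univ.filter fun ε => ∑ i, ε i = 1).map g, ⟨?_, fun s hs => ?_⟩, ?_⟩
  · rw [Finset.disjoint_map]
    exact disjoint_filter.2 fun ε _ h0 h1 => zero_ne_one (h0.symm.trans h1)
  · obtain ⟨i, hi⟩ := exists_forall_eq_zero_of_size_le hdis hs
    rw [filter_map, filter_map, card_map, card_map]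
    refine card_equiv (Equiv.addRight (Pi.single i 1)) fun ε => ?_
    simp only [mem_filter, mem_univ, true_and, Function.comp_apply, Equiv.coe_addRight, hg,
      Pi.add_apply, sum_add_distrib, sum_pi_single']
    constructor <;> rintro ⟨hpar, hsub⟩ <;>
      refine ⟨by simpa using hpar, fun c hc => by simpa [hi c hc] using hsub c hc⟩
  · have hpar (ε : Fin (t + 1) → ZMod 2) : ∑ i, ε i = 0 ∨ ∑ i, ε i = 1 := by
      generalize ∑ i, ε i = b
      decide +revert
    rw [← map_union, ← filter_or, filter_true_of_mem fun ε _ => hpar ε, map_eq_image]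
    rfl

theorem eq_image_vecMul {K ι m : Type*} [Field K] [Fintype K] [Fintype m] [DecidableEq m]
    [DecidableEq (ι → K)]
    {T : Finset (ι → K)} {a : ι → K} {M : Matrix m ι K}
    (hT : (T : Set (ι → K)) = (fun y => a + y) '' (span K (Set.range M.row) : Set (ι → K))) :
    T = univ.image (a + · ᵥ* M) := by
  apply coe_injective
  rw [hT, coe_image, coe_univ, Set.image_univ, ← range_vecMulLinear, LinearMap.coe_range,
    ← Set.range_comp]
  rfl

/-- an affine subspace `T` of `F_2^v` of dimension `t+1` can be split
into a `[t]`-trade iff it is a translation of the linear span of a basis of `t+1`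
vectors with pairwise disjoint supports. -/
theorem affine_split_iff_disjoint_basis (v t : ℕ) (T : Finset (Fin v → ZMod 2))
    (hT : ∃ (W : Submodule (ZMod 2) (Fin v → ZMod 2)) (a : Fin v → ZMod 2),
      Module.finrank (ZMod 2) W = t + 1 ∧
      (T : Set (Fin v → ZMod 2)) = (fun y => a + y) '' (W : Set (Fin v → ZMod 2))) :
    (∃ T0 T1 : Finset (Fin v → ZMod 2), IsTrade t v T0 T1 ∧ T0 ∪ T1 = T) ↔
    (∃ (a : Fin v → ZMod 2) (bs : Fin (t + 1) → (Fin v → ZMod 2)),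
      LinearIndependent (ZMod 2) bs ∧
      (∀ i j, i ≠ j → ∀ c, ¬(bs i c = 1 ∧ bs j c = 1)) ∧
      (T : Set (Fin v → ZMod 2)) =
        (fun y => a + y) ''
          ((Submodule.span (ZMod 2) (Set.range bs) : Submodule (ZMod 2) (Fin v → ZMod 2)) :
            Set (Fin v → ZMod 2))) := by
  obtain ⟨W, a, hW, hTW⟩ := hT
  have hbasis := exists_fun_fin_finrank_span_eq (ZMod 2) (W : Set (Fin v → ZMod 2))
  rw [span_eq, hW] at hbasis
  obtain ⟨w, -, rfl, hw⟩ := hbasis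
  constructor
  · rintro ⟨T0, T1, htr, hun⟩
    obtain ⟨bs, hbs, hdis, hspan⟩ :=
      htr.exists_disjoint_basis a (M := of w) hw (hun.trans (eq_image_vecMul hTW))
    exact ⟨a, bs, hbs, hdis, hspan ▸ hTW⟩
  · rintro ⟨a, bs, hbs, hdis, hT⟩
    obtain ⟨T0, T1, htr, hun⟩ := exists_isTrade_union_eq a hbs hdis
    exact ⟨T0, T1, htr, hun.trans (eq_image_vecMul (M := of bs) hT).symm⟩
end

section
/- For every t > 0 and every i with 0 ≤ i < t, if v ≥ 2t+2−i, then the symmetric difference of the two (t+1)-dimensional linear subspaces T = span({1},{2},…,{i},{i+1},{i+2},…,{t+1}) and T' = span({1},{2},…,{i},{t+2},{t+3},…,{2t+2−i}) of F_2^v (spans of the indicated standard basis vectors) can be split into a [t]-trade; the resulting trade has volume 2^{t+1} − 2^i. In particular, splitting T Δ T' by assigning the elements of T of even weight together with the elements of T' \ T of odd weight to one leg, and the rest to the other leg, yields such a [t]-trade. -/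
open scoped Classical

open Finset
open scoped symmDiff

/-!
Let `A, B` be the coordinate sets spanning `T, T'`, both of size `t + 1`. For any family `F`
of vectors, counting the two legs inside `F` gives
`#(T0 ∩ F) + #(T ∩ T' ∩ F) = #(even part of T ∩ F) + #(odd part of T' ∩ F)`,
and the same for `T1` with the parities swapped. When `F` is the family of vectors covering a
block `s` of size at most `t`, some coordinate `k ∈ A` lies outside `s`, and adding `{k}` is a
parity-reversing involution of `T ∩ F`. So `T ∩ F`, and likewise `T' ∩ F`, has as many even as
odd vectors, and the two legs meet `F` equally often. Taking `F` to be everything gives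
`#T0 + 2^i = 2^t + 2^t`.
-/

lemma card_filter_eq_card_filter_not_of_involution {α : Type*} {p : α → Prop} [DecidablePred p]
    {F : Finset α} (σ : α → α) (hσ : Function.Involutive σ) (hF : ∀ x ∈ F, σ x ∈ F)
    (hp : ∀ x, p (σ x) ↔ ¬ p x) :
    #{x ∈ F | p x} = #{x ∈ F | ¬ p x} := by
  refine card_nbij' σ σ ?_ ?_ (fun x _ => hσ x) (fun x _ => hσ x) <;>
    intro x hx <;> simp only [coe_filter, Set.mem_ofPred_eq] at hx ⊢ <;>
    simp [hF x hx.1, hp, hx.2]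

section ParityLeg

variable {α : Type*} [DecidableEq α]

/-- With `P = T`, `Q = T'` and `p` = even weight this is the leg `T0`; with `¬ p` it is `T1`. -/
def parityLeg (P Q : Finset α) (p : α → Prop) [DecidablePred p] : Finset α :=
  {x ∈ P ∆ Q | (x ∈ P ∧ p x) ∨ (x ∉ P ∧ ¬ p x)}

variable (P Q : Finset α) (p : α → Prop) [DecidablePred p]

lemma card_parityLeg_add_card_inter :
    #(parityLeg P Q p) + #(P ∩ Q) = #{x ∈ P | p x} + #{x ∈ Q | ¬ p x} := by
  have hleg : parityLeg P Q p = ({x ∈ P | p x} \ Q) ∪ ({x ∈ Q | ¬ p x} \ P) := by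
    ext x; simp only [parityLeg, mem_filter, mem_symmDiff, mem_union, mem_sdiff]; tauto
  have hinter : P ∩ Q = ({x ∈ P | p x} ∩ Q) ∪ ({x ∈ Q | ¬ p x} ∩ P) := by
    ext x; simp only [mem_filter, mem_inter, mem_union]; tauto
  rw [hleg, hinter, card_union_of_disjoint, card_union_of_disjoint]
  · have := card_sdiff_add_card_inter {x ∈ P | p x} Q
    have := card_sdiff_add_card_inter {x ∈ Q | ¬ p x} P
    omega
  all_goals
    rw [disjoint_left]; simp only [mem_filter, mem_inter, mem_sdiff]; tauto

lemma symmDiff_sdiff_parityLeg : P ∆ Q \ parityLeg P Q p = parityLeg P Q fun x => ¬ p x := by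
  ext x; simp only [parityLeg, mem_sdiff, mem_filter]; tauto

lemma filter_parityLeg (q : α → Prop) [DecidablePred q] :
    {x ∈ parityLeg P Q p | q x} = parityLeg {x ∈ P | q x} {x ∈ Q | q x} p := by
  ext x; simp only [parityLeg, mem_filter, mem_symmDiff]; tauto

variable {P Q p}

lemma card_parityLeg_eq_of_balanced (hP : #{x ∈ P | p x} = #{x ∈ P | ¬ p x})
    (hQ : #{x ∈ Q | p x} = #{x ∈ Q | ¬ p x}) :
    #(parityLeg P Q p) = #(parityLeg P Q fun x => ¬ p x) := by
  have h₀ := card_parityLeg_add_card_inter P Q p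
  have h₁ := card_parityLeg_add_card_inter P Q fun x => ¬ p x
  simp only [not_not] at h₁
  omega

lemma card_parityLeg_add_card_inter_of_balanced (hP : #{x ∈ P | p x} = #{x ∈ P | ¬ p x})
    (hQ : #{x ∈ Q | p x} = #{x ∈ Q | ¬ p x}) (hPQ : #P = #Q) :
    #(parityLeg P Q p) + #(P ∩ Q) = #P := by
  have := card_parityLeg_add_card_inter P Q p
  have := card_filter_add_card_filter_not (s := P) (fun x => p x)
  have := card_filter_add_card_filter_not (s := Q) (fun x => p x)
  omega

end ParityLeg

section SupportedVecs

variable {ι R : Type*} [Fintype ι] [DecidableEq ι] [Fintype R] [DecidableEq R]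

def supportedVecs [Zero R] (A : Finset ι) : Finset (ι → R) := {x | ∀ j ∉ A, x j = 0}

lemma mem_supportedVecs [Zero R] {A : Finset ι} {x : ι → R} :
    x ∈ supportedVecs A ↔ ∀ j ∉ A, x j = 0 := by
  simp [supportedVecs]

lemma card_supportedVecs [Zero R] (A : Finset ι) :
    #(supportedVecs A : Finset (ι → R)) = Fintype.card R ^ #A := by
  have : supportedVecs A = Fintype.piFinset fun j => if j ∈ A then univ else {(0 : R)} := by
    ext x; simp only [mem_supportedVecs, Fintype.mem_piFinset]
    refine forall_congr' fun j => ?_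
    split_ifs with hj <;> simp [hj]
  rw [this, Fintype.card_piFinset]
  simp [apply_ite, prod_ite_mem]

lemma supportedVecs_inter [Zero R] (A B : Finset ι) :
    (supportedVecs A ∩ supportedVecs B : Finset (ι → R)) = supportedVecs (A ∩ B) := by
  ext x; simp only [mem_inter, mem_supportedVecs, not_and_or, or_imp, forall_and]

lemma add_single_mem_supportedVecs [AddZeroClass R] {A : Finset ι} {x : ι → R} {k : ι}
    (hk : k ∈ A) (c : R) (hx : x ∈ supportedVecs A) :
    x + Pi.single k c ∈ supportedVecs A := by
  rw [mem_supportedVecs] at hx ⊢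
  intro j hj
  rw [Pi.add_apply, hx j hj, Pi.single_eq_of_ne (ne_of_mem_of_not_mem hk hj).symm, add_zero]

lemma mem_span_single_one_iff [Semiring R] (P : ι → Prop) [DecidablePred P] (x : ι → R) :
    x ∈ Submodule.span R {y | ∃ j, P j ∧ y = Pi.single j 1} ↔
      x ∈ supportedVecs {j | P j} := by
  have : {y : ι → R | ∃ j, P j ∧ y = Pi.single j 1} = Pi.basisFun R ι '' {j | P j} := by
    ext y; simp [eq_comm]
  rw [this, Module.Basis.mem_span_image, mem_supportedVecs]
  simp [Set.subset_def, not_imp_comm]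

end SupportedVecs

lemma covers_add_single {ι R : Type*} [DecidableEq ι] [AddZeroClass R] [One R] {s x : ι → R}
    {k : ι} (hsk : s k ≠ 1) (c : R) (hx : ∀ j, s j = 1 → x j = 1) :
    ∀ j, s j = 1 → (x + Pi.single k c : ι → R) j = 1 := fun j hj => by
  rw [Pi.add_apply, Pi.single_eq_of_ne (by rintro rfl; exact hsk hj), add_zero, hx j hj]

section Parity

variable {v : ℕ}

lemma natCast_size (x : Fin v → ZMod 2) : (size x : ZMod 2) = ∑ j, x j := by
  have hx : ∀ j, x j = if x j = 1 then 1 else 0 := fun j => by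
    generalize x j = a; revert a; decide
  rw [size, sum_congr rfl fun j _ => hx j, sum_boole]

lemma even_size_add_single_iff (x : Fin v → ZMod 2) (k : Fin v) :
    Even (size (x + Pi.single k 1)) ↔ ¬ Even (size x) := by
  simp only [← ZMod.natCast_eq_zero_iff_even, natCast_size, Pi.add_apply, sum_add_distrib,
    sum_pi_single', mem_univ, if_true]
  generalize ∑ j, x j = a; revert a; decide

lemma add_single_add_single (x : Fin v → ZMod 2) (k : Fin v) :
    x + Pi.single k 1 + Pi.single k 1 = x := by
  rw [add_assoc, ← Pi.single_add, CharTwo.add_self_eq_zero, Pi.single_zero, add_zero]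

lemma card_filter_even_size_eq_odd {F : Finset (Fin v → ZMod 2)} (k : Fin v)
    (hF : ∀ x ∈ F, x + Pi.single k 1 ∈ F) :
    #{x ∈ F | Even (size x)} = #{x ∈ F | ¬ Even (size x)} :=
  card_filter_eq_card_filter_not_of_involution _ (add_single_add_single · k) hF
    (even_size_add_single_iff · k)

lemma card_filter_even_size_supportedVecs_eq_odd {A : Finset (Fin v)} (hA : A.Nonempty) :
    #{x ∈ supportedVecs A | Even (size x)} = #{x ∈ supportedVecs A | ¬ Even (size x)} :=
  let ⟨k, hk⟩ := hA
  card_filter_even_size_eq_odd k fun _ => add_single_mem_supportedVecs hk 1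

lemma card_filter_even_size_eq_odd_of_covers {A : Finset (Fin v)} {s : Fin v → ZMod 2}
    {k : Fin v} (hk : k ∈ A) (hsk : s k ≠ 1) :
    #{x ∈ {x ∈ supportedVecs A | ∀ j, s j = 1 → x j = 1} | Even (size x)} =
      #{x ∈ {x ∈ supportedVecs A | ∀ j, s j = 1 → x j = 1} | ¬ Even (size x)} :=
  card_filter_even_size_eq_odd k fun x hx => by
    rw [mem_filter] at hx ⊢
    exact ⟨add_single_mem_supportedVecs hk 1 hx.1, covers_add_single hsk 1 hx.2⟩

lemma exists_mem_apply_ne_one_of_size_lt {s : Fin v → ZMod 2} {A : Finset (Fin v)}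
    (h : size s < #A) : ∃ k ∈ A, s k ≠ 1 := by
  obtain ⟨k, hkA, hks⟩ := exists_mem_notMem_of_card_lt_card h
  exact ⟨k, hkA, by simpa using hks⟩

variable {t : ℕ} {A B : Finset (Fin v)}

theorem isTrade_parityLeg_supportedVecs (hA : #A = t + 1) (hB : #B = t + 1) :
    IsTrade t v (parityLeg (supportedVecs A) (supportedVecs B) fun x => Even (size x))
      (parityLeg (supportedVecs A) (supportedVecs B) fun x => ¬ Even (size x)) := by
  refine ⟨by rw [← symmDiff_sdiff_parityLeg]; exact disjoint_sdiff, fun s hs => ?_⟩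
  obtain ⟨k, hkA, hsk⟩ := exists_mem_apply_ne_one_of_size_lt (s := s) (A := A) (by omega)
  obtain ⟨k', hkB, hsk'⟩ := exists_mem_apply_ne_one_of_size_lt (s := s) (A := B) (by omega)
  rw [filter_parityLeg, filter_parityLeg]
  exact card_parityLeg_eq_of_balanced (card_filter_even_size_eq_odd_of_covers hkA hsk)
    (card_filter_even_size_eq_odd_of_covers hkB hsk')

theorem card_parityLeg_supportedVecs (hA : #A = t + 1) (hB : #B = t + 1) :
    #(parityLeg (supportedVecs A) (supportedVecs B) fun x => Even (size x)) + 2 ^ #(A ∩ B) =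
      2 ^ (t + 1) := by
  have := card_parityLeg_add_card_inter_of_balanced
    (card_filter_even_size_supportedVecs_eq_odd (A := A) (card_pos.1 (by omega)))
    (card_filter_even_size_supportedVecs_eq_odd (A := B) (card_pos.1 (by omega)))
    (by rw [card_supportedVecs, card_supportedVecs, hA, hB])
  rwa [supportedVecs_inter, card_supportedVecs, card_supportedVecs, hA, ZMod.card] at this

end Parity

lemma card_filter_val_lt_of_le {v b : ℕ} (hb : b ≤ v) : #{j : Fin v | (j : ℕ) < b} = b := by
  simp [Fin.card_filter_val_lt, hb]

lemma card_filter_val_lt_or_mem_Ico {v a b c : ℕ} (hab : a ≤ b) (hbc : b ≤ c) (hc : c ≤ v) :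
    #{j : Fin v | (j : ℕ) < a ∨ (b ≤ (j : ℕ) ∧ (j : ℕ) < c)} = a + (c - b) := by
  have hIco : univ.filter (fun j : Fin v => b ≤ (j : ℕ) ∧ (j : ℕ) < c) =
      univ.filter (fun j : Fin v => (j : ℕ) < c) \
        univ.filter (fun j : Fin v => (j : ℕ) < b) := by
    ext j; simp only [mem_filter, mem_sdiff, mem_univ, true_and]; omega
  rw [filter_or, card_union_of_disjoint (disjoint_filter.2 fun j _ _ => by omega), hIco,
    card_sdiff_of_subset fun j => by simp only [mem_filter, mem_univ, true_and]; omega,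
    card_filter_val_lt_of_le (by omega), card_filter_val_lt_of_le hc,
    card_filter_val_lt_of_le (by omega)]

theorem symmDiff_subspaces_split_general (v t i : ℕ) (hit : i < t)
    (hv : 2 * t + 2 - i ≤ v)
    (T T' : Submodule (ZMod 2) (Fin v → ZMod 2))
    (hT : T = Submodule.span (ZMod 2)
      {x : Fin v → ZMod 2 | ∃ j : Fin v, (j : ℕ) < t + 1 ∧ x = Pi.single j 1})
    (hT' : T' = Submodule.span (ZMod 2)
      {x : Fin v → ZMod 2 | ∃ j : Fin v,
        ((j : ℕ) < i ∨ (t + 1 ≤ (j : ℕ) ∧ (j : ℕ) < 2 * t + 2 - i)) ∧ x = Pi.single j 1})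
    (U : Finset (Fin v → ZMod 2))
    (hU : (U : Set (Fin v → ZMod 2)) =
      ((T : Set (Fin v → ZMod 2)) \ (T' : Set (Fin v → ZMod 2))) ∪
      ((T' : Set (Fin v → ZMod 2)) \ (T : Set (Fin v → ZMod 2))))
    (T0 T1 : Finset (Fin v → ZMod 2))
    (hT0 : T0 = U.filter (fun x => (x ∈ T ∧ Even (size x)) ∨ (x ∉ T ∧ Odd (size x))))
    (hT1 : T1 = U \ T0) :
    IsTrade t v T0 T1 ∧ T0 ∪ T1 = U ∧ T0.card = 2 ^ (t + 1) - 2 ^ i := by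
  set A : Finset (Fin v) := {j | (j : ℕ) < t + 1}
  set B : Finset (Fin v) :=
    {j | (j : ℕ) < i ∨ (t + 1 ≤ (j : ℕ) ∧ (j : ℕ) < 2 * t + 2 - i)}
  have hA : #A = t + 1 := card_filter_val_lt_of_le (by omega)
  have hB : #B = t + 1 := by
    rw [card_filter_val_lt_or_mem_Ico (by omega) (by omega) hv]; omega
  have hAB : A ∩ B = univ.filter fun j : Fin v => (j : ℕ) < i := by
    ext j; simp only [A, B, mem_inter, mem_filter, mem_univ, true_and]; omega
  have hmemT : ∀ x, x ∈ T ↔ x ∈ supportedVecs A :=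
    hT ▸ mem_span_single_one_iff _
  have hmemT' : ∀ x, x ∈ T' ↔ x ∈ supportedVecs B :=
    hT' ▸ mem_span_single_one_iff _
  have hU' : U = supportedVecs A ∆ supportedVecs B := by
    ext x; simpa [hmemT, hmemT', mem_symmDiff] using Set.ext_iff.1 hU x
  have hT0' : T0 = parityLeg (supportedVecs A) (supportedVecs B) fun x => Even (size x) := by
    rw [hT0, hU']; ext x; simp [parityLeg, hmemT, Nat.not_even_iff_odd]
  have hT1' : T1 = parityLeg (supportedVecs A) (supportedVecs B) fun x => ¬ Even (size x) := by
    rw [hT1, hT0', hU', symmDiff_sdiff_parityLeg]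
  have hvol := card_parityLeg_supportedVecs hA hB
  rw [← hT0', hAB, card_filter_val_lt_of_le (by omega)] at hvol
  exact ⟨hT0' ▸ hT1' ▸ isTrade_parityLeg_supportedVecs hA hB,
    hT1 ▸ union_sdiff_of_subset (hT0 ▸ filter_subset _ _), by omega⟩

/-- for `t > 0`, `i < t` and `v ≥ 2t+2-i`, the symmetric difference of
the `(t+1)`-dimensional linear subspaces
`T = span({1},…,{i},{i+1},…,{t+1})` and `T' = span({1},…,{i},{t+2},…,{2t+2-i})`
of `F_2^v` splits into a `[t]`-trade of volume `2^(t+1) - 2^i`; the split assigning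
the even-weight elements of `T` together with the odd-weight elements of `T' \ T`
to one leg, and the rest to the other leg, is such a trade. -/
theorem symmDiff_subspaces_split (v t i : ℕ) (ht : 0 < t) (hit : i < t)
    (hv : 2 * t + 2 - i ≤ v)
    (T T' : Submodule (ZMod 2) (Fin v → ZMod 2))
    (hT : T = Submodule.span (ZMod 2)
      {x : Fin v → ZMod 2 | ∃ j : Fin v, (j : ℕ) < t + 1 ∧ x = Pi.single j 1})
    (hT' : T' = Submodule.span (ZMod 2)
      {x : Fin v → ZMod 2 | ∃ j : Fin v,
        ((j : ℕ) < i ∨ (t + 1 ≤ (j : ℕ) ∧ (j : ℕ) < 2 * t + 2 - i)) ∧ x = Pi.single j 1})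
    (U : Finset (Fin v → ZMod 2))
    (hU : (U : Set (Fin v → ZMod 2)) =
      ((T : Set (Fin v → ZMod 2)) \ (T' : Set (Fin v → ZMod 2))) ∪
      ((T' : Set (Fin v → ZMod 2)) \ (T : Set (Fin v → ZMod 2))))
    (T0 T1 : Finset (Fin v → ZMod 2))
    (hT0 : T0 = U.filter (fun x => (x ∈ T ∧ Even (size x)) ∨ (x ∉ T ∧ Odd (size x))))
    (hT1 : T1 = U \ T0) :
    IsTrade t v T0 T1 ∧ T0 ∪ T1 = U ∧ T0.card = 2 ^ (t + 1) - 2 ^ i :=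
  symmDiff_subspaces_split_general v t i hit hv T T' hT hT' U hU T0 T1 hT0 hT1
end
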